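/- Define c_{α,β} = Σ_{k=1}^{β} (-1)^{β-k} · [α+k, k] · C(α+β, β-k). Then for α ≥ 1, β ≥ 1, c_{α,β} = (α+β-1) · Σ_{k=1}^{β} (-1)^{β-k} · [α+k-1, k] · C(α+β-2, β-k). -/

import Mathlib

/-- Unsigned Stirling numbers of the first kind. -/
def stirlingFirst : ℕ → ℕ → ℕ
  | 0, 0 => 1
  | 0, _ + 1 => 0
  | _ + 1, 0 => 0
  | n + 1, k + 1 => n * stirlingFirst n (k + 1) + stirlingFirst n k

/-- The coefficients `c_{α,β}` from the paper. -/
def cCoeff (α β : ℕ) : ℤ :=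
  ∑ k ∈ Finset.Icc 1 β,
    (-1 : ℤ) ^ (β - k) * stirlingFirst (α + k) k * (α + β).choose (β - k)

/-!
Put `S_a = ∑_{k ≥ 1} [a + k, k] X^k`. A sum `∑_k (-1)^(b-k) [a + k, k] C(N, b - k)` is the
coefficient of `X^b` in `(1 - X)^N S_a`, so both sides of the identity are coefficients of such
products. The Stirling recurrence says `(1 - X) S_{a+1} = a S_a + X S_a'`, and moving `X d/dX`
past `(1 - X)^(N+1)` gives
`[X^(b+1)] (1 - X)^(N+2) S_{a+1}
  = (a + b + 1) [X^(b+1)] (1 - X)^(N+1) S_a + (N + 1) [X^b] (1 - X)^N S_a`.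
For `N = a + b`, Pascal's rule `(1 - X)^(N+1) = (1 - X)^N - X (1 - X)^N` turns the right-hand side
into `(a + b + 1) [X^(b+1)] (1 - X)^(a+b) S_a`.
-/

open PowerSeries Finset

namespace PowerSeries

variable {R : Type*} [CommRing R]

theorem coeff_one_sub_X_pow (N j : ℕ) :
    coeff j ((1 - X : R⟦X⟧) ^ N) = (-1) ^ j * N.choose j := by
  have hrescale : (1 - X : R⟦X⟧) ^ N =
      rescale (-1) (((1 + Polynomial.X) ^ N : Polynomial R) : R⟦X⟧) := by
    simp [sub_eq_add_neg]
  rw [hrescale, coeff_rescale, Polynomial.coeff_coe, Polynomial.coeff_one_add_X_pow]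

theorem coeff_one_sub_X_pow_mul (N b : ℕ) (f : R⟦X⟧) :
    coeff b ((1 - X) ^ N * f) =
      ∑ k ∈ range (b + 1), (-1) ^ (b - k) * f.coeff k * N.choose (b - k) := by
  rw [mul_comm, coeff_mul,
    Nat.sum_antidiagonal_eq_sum_range_succ fun i j => f.coeff i * coeff j ((1 - X) ^ N)]
  refine sum_congr rfl fun k _ => ?_
  rw [coeff_one_sub_X_pow]
  ring

theorem coeff_succ_one_sub_X_pow_succ_mul (N b : ℕ) (f : R⟦X⟧) :
    coeff (b + 1) ((1 - X) ^ (N + 1) * f) =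
      coeff (b + 1) ((1 - X) ^ N * f) - coeff b ((1 - X) ^ N * f) := by
  rw [pow_succ', mul_assoc, sub_mul, one_mul, map_sub, coeff_succ_X_mul]

end PowerSeries

def stirlingFirstDiagSeries (a : ℕ) : ℤ⟦X⟧ :=
  mk fun k => if k = 0 then 0 else (stirlingFirst (a + k) k : ℤ)

theorem coeff_zero_stirlingFirstDiagSeries (a : ℕ) :
    coeff 0 (stirlingFirstDiagSeries a) = 0 := by
  simp [stirlingFirstDiagSeries]

theorem coeff_stirlingFirstDiagSeries_of_ne_zero (a : ℕ) {k : ℕ} (hk : k ≠ 0) :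
    coeff k (stirlingFirstDiagSeries a) = stirlingFirst (a + k) k := by
  simp [stirlingFirstDiagSeries, hk]

theorem coeff_stirlingFirstDiagSeries_succ (a k : ℕ) :
    coeff k (stirlingFirstDiagSeries (a + 1)) = stirlingFirst (a + 1 + k) k := by
  rcases k.eq_zero_or_pos with rfl | hk
  · rw [coeff_zero_stirlingFirstDiagSeries]; rfl
  · exact coeff_stirlingFirstDiagSeries_of_ne_zero _ hk.ne'

theorem coeff_one_sub_X_pow_mul_stirlingFirstDiagSeries (a N b : ℕ) :
    coeff b ((1 - X) ^ N * stirlingFirstDiagSeries a) =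
      ∑ k ∈ Icc 1 b, (-1 : ℤ) ^ (b - k) * stirlingFirst (a + k) k * N.choose (b - k) := by
  rw [coeff_one_sub_X_pow_mul, range_eq_Ico, sum_eq_sum_Ico_succ_bot (by omega : 0 < b + 1),
    coeff_zero_stirlingFirstDiagSeries, mul_zero, zero_mul, zero_add,
    Ico_add_one_right_eq_Icc]
  refine sum_congr rfl fun k hk => ?_
  rw [coeff_stirlingFirstDiagSeries_of_ne_zero a (by grind)]

theorem one_sub_X_mul_stirlingFirstDiagSeries_succ (a : ℕ) :
    (1 - X) * stirlingFirstDiagSeries (a + 1) =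
      C (a : ℤ) * stirlingFirstDiagSeries a + X * d⁄dX ℤ (stirlingFirstDiagSeries a) := by
  ext (_ | k)
  · simp only [sub_mul, one_mul, map_sub, map_add, coeff_zero_X_mul, coeff_C_mul,
      coeff_zero_stirlingFirstDiagSeries, mul_zero, sub_zero, add_zero]
  · have hrec : stirlingFirst (a + 1 + (k + 1)) (k + 1) =
        (a + k + 1) * stirlingFirst (a + (k + 1)) (k + 1) + stirlingFirst (a + 1 + k) k := by
      rw [show a + 1 + (k + 1) = a + k + 1 + 1 by ring, show a + 1 + k = a + k + 1 by ring]; rfl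
    rw [sub_mul, one_mul, map_sub, coeff_succ_X_mul, map_add, coeff_C_mul, coeff_succ_X_mul,
      coeff_derivative, coeff_stirlingFirstDiagSeries_succ, coeff_stirlingFirstDiagSeries_succ,
      hrec, coeff_stirlingFirstDiagSeries_of_ne_zero a k.succ_ne_zero]
    push_cast
    ring

theorem coeff_succ_one_sub_X_pow_mul_stirlingFirstDiagSeries_succ (a N b : ℕ) :
    coeff (b + 1) ((1 - X : ℤ⟦X⟧) ^ (N + 2) * stirlingFirstDiagSeries (a + 1)) =
      (a + b + 1) * coeff (b + 1) ((1 - X) ^ (N + 1) * stirlingFirstDiagSeries a) +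
        (N + 1) * coeff b ((1 - X) ^ N * stirlingFirstDiagSeries a) := by
  set S := stirlingFirstDiagSeries a
  have hD : d⁄dX ℤ ((1 - X) ^ (N + 1) * S) =
      (1 - X) ^ (N + 1) * d⁄dX ℤ S - C ((N : ℤ) + 1) * ((1 - X) ^ N * S) := by
    rw [Derivation.leibniz, derivative_pow, map_sub, Derivation.map_one_eq_zero, derivative_X,
      add_tsub_cancel_right, smul_eq_mul, map_add, map_natCast, map_one]
    push_cast
    ring
  have hsplit : (1 - X) ^ (N + 2) * stirlingFirstDiagSeries (a + 1) =
      C (a : ℤ) * ((1 - X) ^ (N + 1) * S) + X * d⁄dX ℤ ((1 - X) ^ (N + 1) * S) +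
        C ((N : ℤ) + 1) * (X * ((1 - X) ^ N * S)) := by
    rw [pow_succ, mul_assoc, one_sub_X_mul_stirlingFirstDiagSeries_succ, hD]
    ring
  rw [hsplit, map_add, map_add, coeff_C_mul, coeff_succ_X_mul, coeff_derivative, coeff_C_mul,
    coeff_succ_X_mul]
  ring

theorem stmt_4 (α β : ℕ) (hα : 1 ≤ α) (hβ : 1 ≤ β) :
    cCoeff α β = ((α : ℤ) + β - 1) *
      ∑ k ∈ Finset.Icc 1 β,
        (-1 : ℤ) ^ (β - k) * stirlingFirst (α + k - 1) k * (α + β - 2).choose (β - k) := by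
  obtain ⟨a, rfl⟩ := Nat.exists_eq_add_of_le' hα
  obtain ⟨b, rfl⟩ := Nat.exists_eq_add_of_le' hβ
  have hlhs : cCoeff (a + 1) (b + 1) =
      coeff (b + 1) ((1 - X : ℤ⟦X⟧) ^ (a + b + 2) * stirlingFirstDiagSeries (a + 1)) := by
    rw [coeff_one_sub_X_pow_mul_stirlingFirstDiagSeries, show a + b + 2 = a + 1 + (b + 1) by ring]
    rfl
  have hrhs : ∑ k ∈ Icc 1 (b + 1), (-1 : ℤ) ^ (b + 1 - k) * stirlingFirst (a + 1 + k - 1) k *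
        (a + 1 + (b + 1) - 2).choose (b + 1 - k) =
      coeff (b + 1) ((1 - X : ℤ⟦X⟧) ^ (a + b) * stirlingFirstDiagSeries a) := by
    rw [coeff_one_sub_X_pow_mul_stirlingFirstDiagSeries, show a + 1 + (b + 1) - 2 = a + b by omega]
    refine sum_congr rfl fun k _ => ?_
    rw [show a + 1 + k - 1 = a + k by omega]
  rw [hlhs, hrhs, coeff_succ_one_sub_X_pow_mul_stirlingFirstDiagSeries_succ,
    coeff_succ_one_sub_X_pow_succ_mul]
  push_cast
  ring
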